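/- Let m ≥ 1 and n = 2m. Suppose nonnegative reals a_0,…,a_{m−1}, b_0,…,b_{m−1}, c_0,…,c_{m−1} satisfy a_{u−v} + a_{min(u+v, 2m−1−u−v)} + b_u + c_v ≥ 1 for all integers u, v with 0 ≤ v ≤ u ≤ m−1. Then every no-three-in-line set S ⊆ C_0(2m) satisfies |S| ≤ 8·Σ_{i=0}^{m−1} a_i + 4·Σ_{i=0}^{m−1} b_i + 2 c_0 + 4·Σ_{j=1}^{m−1} c_j, and the same bound holds for every no-three-in-line set S ⊆ C_1(2m). -/

import Mathlib

/-- The `n × n` integer grid `G_n = {0,…,n−1} × {0,…,n−1} ⊆ ℤ²`. -/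
noncomputable def grid (n : ℕ) : Finset (ℤ × ℤ) :=
  Finset.Icc (0 : ℤ) ((n : ℤ) - 1) ×ˢ Finset.Icc (0 : ℤ) ((n : ℤ) - 1)

/-- The parity (checkerboard) class `C_ε(n) = {(x,y) ∈ G_n : x + y ≡ ε (mod 2)}`. -/
noncomputable def gridClass (n : ℕ) (ε : ℕ) : Finset (ℤ × ℤ) :=
  (grid n).filter (fun P => (P.1 + P.2) % 2 = (ε : ℤ))

/-- Three points of `ℤ²` are collinear. -/
def Collinear3 (P Q R : ℤ × ℤ) : Prop :=
  (Q.1 - P.1) * (R.2 - P.2) = (R.1 - P.1) * (Q.2 - P.2)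

/-- A finite set is no-three-in-line if no three distinct points of it are collinear. -/
def NTIL (S : Finset (ℤ × ℤ)) : Prop :=
  ∀ P ∈ S, ∀ Q ∈ S, ∀ R ∈ S, P ≠ Q → P ≠ R → Q ≠ R → ¬ Collinear3 P Q R

/-!
Reflecting `x ↦ 2m-1-x` maps `C_0(2m)` onto `C_1(2m)` and preserves no-three-in-line sets, so
it suffices to treat `C_1(2m)`. Give a point `P = (x, y)` of `C_1(2m)` the weight
`a x̄ + a ȳ + b u + c v`, where `x̄, ȳ` are the distances of `x, y` to the nearer edge of
`{0, …, 2m-1}` and `P` lies on the diagonal `x - y = ±(2m-1-2u)` and the antidiagonal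
`x + y = 2m-1 ± 2v`. Then `u - v = min x̄ ȳ` and `min (u+v) (2m-1-u-v) = max x̄ ȳ`, so the
feasibility condition says every weight is at least `1`. Each value of `x̄`, `ȳ`, `u` or `v`
singles out at most two parallel lines (one when `v = 0`), each containing at most two points
of `S`, and summing the weights over `S` gives the bound.
-/

open Finset

theorem Finset.sum_comp_le_of_card_fiber_le {α ι R : Type*} [DecidableEq ι]
    [Semiring R] [PartialOrder R] [IsOrderedRing R] {S : Finset α} {T : Finset ι} {g : α → ι}
    (hg : ∀ P ∈ S, g P ∈ T) {f : ι → R} (hf : ∀ i ∈ T, 0 ≤ f i) {N : ι → ℕ}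
    (hN : ∀ i ∈ T, #{P ∈ S | g P = i} ≤ N i) :
    ∑ P ∈ S, f (g P) ≤ ∑ i ∈ T, (N i : R) * f i := by
  rw [← sum_fiberwise_of_maps_to' hg]
  refine sum_le_sum fun i hi => ?_
  rw [sum_const, nsmul_eq_mul]
  exact mul_le_mul_of_nonneg_right (Nat.mono_cast (hN i hi)) (hf i hi)

theorem mem_gridClass_iff {n ε : ℕ} {P : ℤ × ℤ} :
    P ∈ gridClass n ε ↔
      0 ≤ P.1 ∧ P.1 ≤ n - 1 ∧ 0 ≤ P.2 ∧ P.2 ≤ n - 1 ∧ (P.1 + P.2) % 2 = ε := by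
  simp only [gridClass, grid, mem_filter, mem_product, mem_Icc, and_assoc]

namespace NTIL

variable {S : Finset (ℤ × ℤ)}

theorem card_filter_line_le_two (hS : NTIL S) {α β : ℤ} (hαβ : α ≠ 0 ∨ β ≠ 0) (γ : ℤ) :
    #{P ∈ S | α * P.1 + β * P.2 = γ} ≤ 2 := by
  by_contra! hcard
  obtain ⟨P, hP, Q, hQ, R, hR, hPQ, hPR, hQR⟩ := two_lt_card.1 hcard
  rw [mem_filter] at hP hQ hR
  refine hS P hP.1 Q hQ.1 R hR.1 hPQ hPR hQR ?_
  have hPQ' : α * (Q.1 - P.1) + β * (Q.2 - P.2) = 0 := by linear_combination hQ.2 - hP.2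
  have hPR' : α * (R.1 - P.1) + β * (R.2 - P.2) = 0 := by linear_combination hR.2 - hP.2
  unfold Collinear3
  rcases hαβ with hα | hβ
  · exact mul_left_cancel₀ hα (by linear_combination (R.2 - P.2) * hPQ' - (Q.2 - P.2) * hPR')
  · exact mul_left_cancel₀ hβ (by linear_combination (Q.1 - P.1) * hPR' - (R.1 - P.1) * hPQ')

theorem card_filter_le_four_of_parallel (hS : NTIL S) {α β : ℤ} (hαβ : α ≠ 0 ∨ β ≠ 0)
    (γ γ' : ℤ) (p : ℤ × ℤ → Prop) [DecidablePred p]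
    (hp : ∀ P ∈ S, p P → α * P.1 + β * P.2 = γ ∨ α * P.1 + β * P.2 = γ') :
    #{P ∈ S | p P} ≤ 4 := by
  have hsub : {P ∈ S | p P} ⊆
      {P ∈ S | α * P.1 + β * P.2 = γ} ∪ {P ∈ S | α * P.1 + β * P.2 = γ'} := by
    intro P hP
    rw [mem_filter] at hP
    simpa [mem_union, mem_filter, hP.1] using hp P hP.1 hP.2
  calc #{P ∈ S | p P} ≤ _ := card_le_card hsub
    _ ≤ _ := card_union_le _ _
    _ ≤ 2 + 2 := add_le_add (hS.card_filter_line_le_two hαβ γ) (hS.card_filter_line_le_two hαβ γ')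

theorem image {f : ℤ × ℤ → ℤ × ℤ} (hS : NTIL S)
    (hcol : ∀ P Q R, Collinear3 (f P) (f Q) (f R) → Collinear3 P Q R) : NTIL (S.image f) := by
  simp only [NTIL, mem_image]
  rintro _ ⟨P, hP, rfl⟩ _ ⟨Q, hQ, rfl⟩ _ ⟨R, hR, rfl⟩ hPQ hPR hQR hcol'
  exact hS P hP Q hQ R hR (ne_of_apply_ne f hPQ) (ne_of_apply_ne f hPR) (ne_of_apply_ne f hQR)
    (hcol P Q R hcol')

end NTIL

def reflect (k : ℤ) (P : ℤ × ℤ) : ℤ × ℤ := (k - P.1, P.2)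

theorem reflect_involutive (k : ℤ) : Function.Involutive (reflect k) := fun P => by
  simp [reflect]

theorem Collinear3.of_reflect {k : ℤ} {P Q R : ℤ × ℤ}
    (h : Collinear3 (reflect k P) (reflect k Q) (reflect k R)) : Collinear3 P Q R := by
  unfold Collinear3 reflect at *
  linear_combination -h

theorem reflect_mem_gridClass_one {m : ℕ} {P : ℤ × ℤ} (hP : P ∈ gridClass (2 * m) 0) :
    reflect (2 * m - 1) P ∈ gridClass (2 * m) 1 := by
  rw [mem_gridClass_iff] at hP ⊢
  simp only [reflect]
  omega

section FoldedIndices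

variable (m : ℕ)

def edgeDist (t : ℤ) : ℕ := (min t (2 * m - 1 - t)).toNat

def diagIdx (P : ℤ × ℤ) : ℕ := (2 * m - 1 - |P.1 - P.2|).toNat / 2

def antidiagIdx (P : ℤ × ℤ) : ℕ := |P.1 + P.2 - (2 * m - 1)|.toNat / 2

variable {m} {P : ℤ × ℤ}

theorem edgeDist_lt {t : ℤ} (h0 : 0 ≤ t) (h1 : t ≤ 2 * m - 1) : edgeDist m t < m := by
  unfold edgeDist; omega

theorem eq_or_eq_of_edgeDist_eq {t : ℤ} {i : ℕ} (h0 : 0 ≤ t) (h1 : t ≤ 2 * m - 1)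
    (h : edgeDist m t = i) :
    t = i ∨ t = 2 * m - 1 - i := by
  unfold edgeDist at h; omega

variable (hP : P ∈ gridClass (2 * m) 1)
include hP

theorem diagIdx_lt : diagIdx m P < m := by
  rw [mem_gridClass_iff] at hP; unfold diagIdx
  rcases abs_cases (P.1 - P.2) with ⟨h, _⟩ | ⟨h, _⟩ <;> rw [h] <;> omega

theorem antidiagIdx_le_diagIdx : antidiagIdx m P ≤ diagIdx m P := by
  rw [mem_gridClass_iff] at hP; unfold diagIdx antidiagIdx
  rcases abs_cases (P.1 - P.2) with ⟨h, _⟩ | ⟨h, _⟩ <;>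
    rcases abs_cases (P.1 + P.2 - (2 * m - 1 : ℤ)) with ⟨h', _⟩ | ⟨h', _⟩ <;> rw [h, h'] <;> omega

/- With s = x + y - (2m-1) and d = x - y, the edge distances of x and y are (2m-1-|s+d|)/2 and
(2m-1-|s-d|)/2, while |s| + |d| = max |s+d| |s-d|. -/
theorem diagIdx_sub_antidiagIdx :
    diagIdx m P - antidiagIdx m P = min (edgeDist m P.1) (edgeDist m P.2) := by
  rw [mem_gridClass_iff] at hP; unfold diagIdx antidiagIdx edgeDist
  rcases abs_cases (P.1 - P.2) with ⟨h, _⟩ | ⟨h, _⟩ <;>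
    rcases abs_cases (P.1 + P.2 - (2 * m - 1 : ℤ)) with ⟨h', _⟩ | ⟨h', _⟩ <;> rw [h, h'] <;> omega

theorem min_diagIdx_add_antidiagIdx :
    min (diagIdx m P + antidiagIdx m P) (2 * m - 1 - diagIdx m P - antidiagIdx m P) =
      max (edgeDist m P.1) (edgeDist m P.2) := by
  rw [mem_gridClass_iff] at hP; unfold diagIdx antidiagIdx edgeDist
  rcases abs_cases (P.1 - P.2) with ⟨h, _⟩ | ⟨h, _⟩ <;>
    rcases abs_cases (P.1 + P.2 - (2 * m - 1 : ℤ)) with ⟨h', _⟩ | ⟨h', _⟩ <;> rw [h, h'] <;> omega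

theorem diff_eq_or_of_diagIdx_eq {i : ℕ} (h : diagIdx m P = i) :
    P.1 - P.2 = 2 * m - 1 - 2 * i ∨ P.2 - P.1 = 2 * m - 1 - 2 * i := by
  rw [mem_gridClass_iff] at hP; unfold diagIdx at h
  rcases abs_cases (P.1 - P.2) with ⟨h', _⟩ | ⟨h', _⟩ <;> rw [h'] at h <;> omega

theorem sum_eq_or_of_antidiagIdx_eq {i : ℕ} (h : antidiagIdx m P = i) :
    P.1 + P.2 = 2 * m - 1 + 2 * i ∨ P.1 + P.2 = 2 * m - 1 - 2 * i := by
  rw [mem_gridClass_iff] at hP; unfold antidiagIdx at h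
  rcases abs_cases (P.1 + P.2 - (2 * m - 1 : ℤ)) with ⟨h', _⟩ | ⟨h', _⟩ <;> rw [h'] at h <;> omega

theorem one_le_weight {a b c : ℕ → ℝ}
    (hcon : ∀ u v : ℕ, v ≤ u → u ≤ m - 1 →
      1 ≤ a (u - v) + a (min (u + v) (2 * m - 1 - u - v)) + b u + c v) :
    1 ≤ a (edgeDist m P.1) + a (edgeDist m P.2) + b (diagIdx m P) + c (antidiagIdx m P) := by
  have h := hcon _ _ (antidiagIdx_le_diagIdx hP) (Nat.le_sub_one_of_lt (diagIdx_lt hP))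
  rwa [diagIdx_sub_antidiagIdx hP, min_diagIdx_add_antidiagIdx hP, fn_min_add_fn_max] at h

end FoldedIndices

section Fibers

variable {m : ℕ} {S : Finset (ℤ × ℤ)} (hsub : S ⊆ gridClass (2 * m) 1) (hS : NTIL S) (i : ℕ)
include hsub hS

theorem card_filter_edgeDist_fst_le : #{P ∈ S | edgeDist m P.1 = i} ≤ 4 := by
  refine hS.card_filter_le_four_of_parallel (α := 1) (β := 0) (by simp) i (2 * m - 1 - i) _ ?_
  intro P hP h
  obtain ⟨h0, h1, -⟩ := mem_gridClass_iff.1 (hsub hP)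
  simpa using eq_or_eq_of_edgeDist_eq h0 h1 h

theorem card_filter_edgeDist_snd_le : #{P ∈ S | edgeDist m P.2 = i} ≤ 4 := by
  refine hS.card_filter_le_four_of_parallel (α := 0) (β := 1) (by simp) i (2 * m - 1 - i) _ ?_
  intro P hP h
  obtain ⟨-, -, h0, h1, -⟩ := mem_gridClass_iff.1 (hsub hP)
  simpa using eq_or_eq_of_edgeDist_eq h0 h1 h

theorem card_filter_diagIdx_le : #{P ∈ S | diagIdx m P = i} ≤ 4 := by
  refine hS.card_filter_le_four_of_parallel (α := 1) (β := -1) (by simp)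
    (2 * m - 1 - 2 * i) (-(2 * m - 1 - 2 * i)) _ fun P hP h => ?_
  have := diff_eq_or_of_diagIdx_eq (hsub hP) h
  omega

theorem card_filter_antidiagIdx_le : #{P ∈ S | antidiagIdx m P = i} ≤ 4 := by
  refine hS.card_filter_le_four_of_parallel (α := 1) (β := 1) (by simp)
    (2 * m - 1 + 2 * i) (2 * m - 1 - 2 * i) _ fun P hP h => ?_
  simpa using sum_eq_or_of_antidiagIdx_eq (hsub hP) h

theorem card_filter_antidiagIdx_eq_zero_le : #{P ∈ S | antidiagIdx m P = 0} ≤ 2 := by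
  refine (card_le_card fun P hP => ?_).trans
    (hS.card_filter_line_le_two (α := 1) (β := 1) (by simp) (2 * m - 1))
  rw [mem_filter] at hP ⊢
  have := sum_eq_or_of_antidiagIdx_eq (hsub hP.1) hP.2
  exact ⟨hP.1, by simpa using this⟩

theorem sum_edgeDist_fst_le {f : ℕ → ℝ} (hf : ∀ i ≤ m - 1, 0 ≤ f i) :
    ∑ P ∈ S, f (edgeDist m P.1) ≤ 4 * ∑ i ∈ range m, f i := by
  have hgrid {P : ℤ × ℤ} (hP : P ∈ S) := mem_gridClass_iff.1 (hsub hP)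
  simpa only [Nat.cast_ofNat, ← mul_sum] using sum_comp_le_of_card_fiber_le (N := fun _ => 4)
    (fun P h => mem_range.2 (edgeDist_lt (hgrid h).1 (hgrid h).2.1))
    (fun i hi => hf i (Nat.le_sub_one_of_lt (mem_range.1 hi)))
    fun i _ => card_filter_edgeDist_fst_le hsub hS i

theorem sum_edgeDist_snd_le {f : ℕ → ℝ} (hf : ∀ i ≤ m - 1, 0 ≤ f i) :
    ∑ P ∈ S, f (edgeDist m P.2) ≤ 4 * ∑ i ∈ range m, f i := by
  have hgrid {P : ℤ × ℤ} (hP : P ∈ S) := mem_gridClass_iff.1 (hsub hP)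
  simpa only [Nat.cast_ofNat, ← mul_sum] using sum_comp_le_of_card_fiber_le (N := fun _ => 4)
    (fun P h => mem_range.2 (edgeDist_lt (hgrid h).2.2.1 (hgrid h).2.2.2.1))
    (fun i hi => hf i (Nat.le_sub_one_of_lt (mem_range.1 hi)))
    fun i _ => card_filter_edgeDist_snd_le hsub hS i

theorem sum_diagIdx_le {f : ℕ → ℝ} (hf : ∀ i ≤ m - 1, 0 ≤ f i) :
    ∑ P ∈ S, f (diagIdx m P) ≤ 4 * ∑ i ∈ range m, f i := by
  simpa only [Nat.cast_ofNat, ← mul_sum] using sum_comp_le_of_card_fiber_le (N := fun _ => 4)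
    (fun P h => mem_range.2 (diagIdx_lt (hsub h)))
    (fun i hi => hf i (Nat.le_sub_one_of_lt (mem_range.1 hi)))
    fun i _ => card_filter_diagIdx_le hsub hS i

theorem sum_antidiagIdx_le {f : ℕ → ℝ} (hf : ∀ i ≤ m - 1, 0 ≤ f i) :
    ∑ P ∈ S, f (antidiagIdx m P) ≤ 2 * f 0 + 4 * ∑ i ∈ Ico 1 m, f i := by
  have hfiber : ∑ P ∈ S, f (antidiagIdx m P) ≤
      ∑ i ∈ insert 0 (Ico 1 m), ((if i = 0 then 2 else 4 : ℕ) : ℝ) * f i := by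
    refine sum_comp_le_of_card_fiber_le (fun P hP => ?_) (fun i hi => hf i ?_) fun i _ => ?_
    · have := antidiagIdx_le_diagIdx (hsub hP)
      have := diagIdx_lt (hsub hP)
      simp only [mem_insert, mem_Ico]
      omega
    · simp only [mem_insert, mem_Ico] at hi
      omega
    · split_ifs with h
      · exact h ▸ card_filter_antidiagIdx_eq_zero_le hsub hS
      · exact card_filter_antidiagIdx_le hsub hS i
  have hrest : ∑ i ∈ Ico 1 m, ((if i = 0 then 2 else 4 : ℕ) : ℝ) * f i =
      4 * ∑ i ∈ Ico 1 m, f i := by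
    rw [mul_sum]
    refine sum_congr rfl fun i hi => ?_
    rw [if_neg (by simp only [mem_Ico] at hi; omega), Nat.cast_ofNat]
  rwa [sum_insert (by simp), hrest, if_pos rfl, Nat.cast_ofNat] at hfiber

end Fibers

theorem card_le_of_reduced_dual_odd {m : ℕ} {a b c : ℕ → ℝ}
    (ha : ∀ i ≤ m - 1, 0 ≤ a i) (hb : ∀ i ≤ m - 1, 0 ≤ b i) (hc : ∀ i ≤ m - 1, 0 ≤ c i)
    (hcon : ∀ u v : ℕ, v ≤ u → u ≤ m - 1 →
      1 ≤ a (u - v) + a (min (u + v) (2 * m - 1 - u - v)) + b u + c v)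
    {S : Finset (ℤ × ℤ)} (hsub : S ⊆ gridClass (2 * m) 1) (hS : NTIL S) :
    (S.card : ℝ) ≤ 8 * (∑ i ∈ range m, a i) + 4 * (∑ i ∈ range m, b i)
        + 2 * c 0 + 4 * (∑ j ∈ Ico 1 m, c j) := by
  calc (S.card : ℝ) = ∑ P ∈ S, (1 : ℝ) := by simp
    _ ≤ ∑ P ∈ S, (a (edgeDist m P.1) + a (edgeDist m P.2) + b (diagIdx m P)
          + c (antidiagIdx m P)) := sum_le_sum fun P hP => one_le_weight (hsub hP) hcon
    _ = ∑ P ∈ S, a (edgeDist m P.1) + ∑ P ∈ S, a (edgeDist m P.2) + ∑ P ∈ S, b (diagIdx m P)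
          + ∑ P ∈ S, c (antidiagIdx m P) := by simp only [sum_add_distrib]
    _ ≤ _ := by
      linarith [sum_edgeDist_fst_le hsub hS ha, sum_edgeDist_snd_le hsub hS ha,
        sum_diagIdx_le hsub hS hb, sum_antidiagIdx_le hsub hS hc]

theorem even_reduced_dual_bound_general (m : ℕ) (a b c : ℕ → ℝ)
    (ha : ∀ i ≤ m - 1, 0 ≤ a i) (hb : ∀ i ≤ m - 1, 0 ≤ b i) (hc : ∀ i ≤ m - 1, 0 ≤ c i)
    (hcon : ∀ u v : ℕ, v ≤ u → u ≤ m - 1 →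
      1 ≤ a (u - v) + a (min (u + v) (2 * m - 1 - u - v)) + b u + c v) :
    ∀ ε : ℕ, ε ≤ 1 → ∀ S : Finset (ℤ × ℤ), S ⊆ gridClass (2 * m) ε → NTIL S →
      (S.card : ℝ) ≤ 8 * (∑ i ∈ Finset.range m, a i) + 4 * (∑ i ∈ Finset.range m, b i)
        + 2 * c 0 + 4 * (∑ j ∈ Finset.Ico 1 m, c j) := by
  intro ε hε S hsub hS
  interval_cases ε
  · have hS' : NTIL (S.image (reflect (2 * m - 1))) :=
      hS.image fun _ _ _ => Collinear3.of_reflect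
    have hsub' : S.image (reflect (2 * m - 1)) ⊆ gridClass (2 * m) 1 :=
      image_subset_iff.2 fun P hP => reflect_mem_gridClass_one (hsub hP)
    simpa only [card_image_of_injective _ (reflect_involutive _).injective] using
      card_le_of_reduced_dual_odd ha hb hc hcon hsub' hS'
  · exact card_le_of_reduced_dual_odd ha hb hc hcon hsub hS

/-- Even side length `n = 2m`: a feasible symmetry-reduced dual weighting bounds every
no-three-in-line subset of either parity class `C_0(2m)` or `C_1(2m)`. -/
theorem even_reduced_dual_bound (m : ℕ) (hm : 1 ≤ m) (a b c : ℕ → ℝ)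
    (ha : ∀ i ≤ m - 1, 0 ≤ a i) (hb : ∀ i ≤ m - 1, 0 ≤ b i) (hc : ∀ i ≤ m - 1, 0 ≤ c i)
    (hcon : ∀ u v : ℕ, v ≤ u → u ≤ m - 1 →
      1 ≤ a (u - v) + a (min (u + v) (2 * m - 1 - u - v)) + b u + c v) :
    ∀ ε : ℕ, ε ≤ 1 → ∀ S : Finset (ℤ × ℤ), S ⊆ gridClass (2 * m) ε → NTIL S →
      (S.card : ℝ) ≤ 8 * (∑ i ∈ Finset.range m, a i) + 4 * (∑ i ∈ Finset.range m, b i)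
        + 2 * c 0 + 4 * (∑ j ∈ Finset.Ico 1 m, c j) :=
  even_reduced_dual_bound_general m a b c ha hb hc hcon
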